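/- Contour pair bijection: embedded trees with n edges are in one-to-one correspondence with pairs (E,V) of walks of length 2n such that E is a Dyck path (E(0)=E(2n)=0, |E(t+1)-E(t)|=1, E(t)≥0), V is a bridge with steps in {-1,0,1} (V(0)=V(2n)=0), and whenever E(t)=E(t') with E(s) ≥ E(t) for all t < s < t', one has V(t)=V(t'). -/

import Mathlib

/-- Rooted plane trees with integer labels on vertices. -/
inductive LTree : Type
  | node : ℤ → List LTree → LTree

namespace LTree

/-- The label of the root. -/
def label : LTree → ℤ
  | .node v _ => v

mutual
  /-- Number of edges of a labelled plane tree. -/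
  def numEdges : LTree → ℕ
    | .node _ ts => numEdgesL ts
  def numEdgesL : List LTree → ℕ
    | [] => 0
    | t :: r => numEdges t + 1 + numEdgesL r
end

mutual
  /-- The labels of two adjacent vertices differ by at most 1. -/
  def Good : LTree → Prop
    | .node v ts => GoodL v ts
  def GoodL : ℤ → List LTree → Prop
    | _, [] => True
    | v, t :: r => |label t - v| ≤ 1 ∧ Good t ∧ GoodL v r
end

mutual
  /-- Contour traversal of a tree whose root is at height `h`: the list of
  pairs (height, label) of the vertices visited at times `0, 1, …, 2·numEdges`. -/
  def contour (h : ℕ) : LTree → List (ℕ × ℤ)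
    | .node v ts => (h, v) :: contourL h v ts
  def contourL (h : ℕ) (v : ℤ) : List LTree → List (ℕ × ℤ)
    | [] => []
    | t :: r => contour (h + 1) t ++ [(h, v)] ++ contourL h v r
end

end LTree

/-- Embedded trees with `n` edges: root label `0`, adjacent labels differing by
at most `1`. -/
def EmbTrees0 (n : ℕ) : Set LTree :=
  {T | T.Good ∧ T.label = 0 ∧ T.numEdges = n}

/-- The contour pair `(E, V)` of a tree: `E t` is the height and `V t` the
label of the vertex visited at time `t` of the contour traversal. -/
def contourPair (n : ℕ) (T : LTree) :
    (Fin (2 * n + 1) → ℤ) × (Fin (2 * n + 1) → ℤ) :=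
  (fun t => (((T.contour 0).getD t.val (0, 0)).1 : ℤ),
   fun t => ((T.contour 0).getD t.val (0, 0)).2)

/-- The set `𝓔𝓥_{2n}` of admissible pairs of walks of length `2n`:
`E` is a Dyck path, `V` is a bridge with steps in `{-1,0,1}`, and the
consistency condition holds. -/
def EVSet (n : ℕ) : Set ((Fin (2 * n + 1) → ℤ) × (Fin (2 * n + 1) → ℤ)) :=
  {p |
    p.1 ⟨0, Nat.succ_pos _⟩ = 0 ∧ p.1 ⟨2 * n, Nat.lt_succ_self _⟩ = 0 ∧
    (∀ t : Fin (2 * n + 1), 0 ≤ p.1 t) ∧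
    (∀ t : Fin (2 * n + 1), ∀ ht : t.val + 1 < 2 * n + 1,
      |p.1 ⟨t.val + 1, ht⟩ - p.1 t| = 1) ∧
    p.2 ⟨0, Nat.succ_pos _⟩ = 0 ∧ p.2 ⟨2 * n, Nat.lt_succ_self _⟩ = 0 ∧
    (∀ t : Fin (2 * n + 1), ∀ ht : t.val + 1 < 2 * n + 1,
      |p.2 ⟨t.val + 1, ht⟩ - p.2 t| ≤ 1) ∧
    (∀ t t' : Fin (2 * n + 1), t ≤ t' → p.1 t = p.1 t' →
      (∀ s : Fin (2 * n + 1), t < s → s < t' → p.1 t ≤ p.1 s) → p.2 t = p.2 t')}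

/-!
The contour of a tree rooted at height `h` with label `v` and subtrees `t₁, …, tₖ` is
`(h, v) :: c₁ ++ [(h, v)] ++ ⋯ ++ cₖ ++ [(h, v)]`, where `cᵢ` is the contour of `tᵢ` at
height `h + 1`. Conversely, a list of (height, label) pairs satisfying the conditions of `EVSet`
splits at the first return of its height walk to the starting height into a piece strictly above
it followed by the rest; the consistency condition forces the returning vertex to carry the root
label, and both pieces satisfy the conditions again, so strong induction on the length rebuilds a
good tree with the given contour. Since the subtree contours lie strictly above `h`, this split is
unique, which gives injectivity.
-/

namespace List

theorem IsChain.cons_append_cons {α : Type*} {R : α → α → Prop} {x a : α} {A C : List α}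
    (hA : A.IsChain R) (hC : (x :: C).IsChain R) (hhead : A.head? = some a)
    (hlast : A.getLast? = some a) (hxa : R x a) (hax : R a x) :
    (x :: (A ++ x :: C)).IsChain R := by
  cases A with
  | nil => simp at hhead
  | cons a' A' =>
    obtain rfl : a' = a := by simpa using hhead
    refine isChain_cons_cons.2 ⟨hxa, isChain_append.2 ⟨hA, hC, ?_⟩⟩
    simpa [hlast] using hax

theorem append_cons_inj_of_forall {α : Type*} {p : α → Bool} {A₁ A₂ C₁ C₂ : List α} {x : α}
    (hA₁ : ∀ a ∈ A₁, p a) (hA₂ : ∀ a ∈ A₂, p a) (hx : p x = false)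
    (h : A₁ ++ x :: C₁ = A₂ ++ x :: C₂) : A₁ = A₂ ∧ C₁ = C₂ := by
  have hA : A₁ = A₂ := by
    have key : ∀ A C, (∀ a ∈ A, p a) → (A ++ x :: C).takeWhile p = A := fun A C hA => by
      simp [takeWhile_append_of_pos hA, takeWhile_cons_of_neg, hx]
    rw [← key A₁ C₁ hA₁, ← key A₂ C₂ hA₂, h]
  subst hA
  exact ⟨rfl, (cons_injective (append_cancel_left h))⟩

end List

namespace LTree

theorem head?_contour (h : ℕ) (T : LTree) : (contour h T).head? = some (h, T.label) := by
  cases T; rfl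

theorem contourL_cons (h : ℕ) (v : ℤ) (t : LTree) (ts : List LTree) :
    contourL h v (t :: ts) = contour (h + 1) t ++ (h, v) :: contourL h v ts := by
  simp [contourL]

mutual
theorem length_contour (h : ℕ) : ∀ T : LTree, (contour h T).length = 2 * T.numEdges + 1
  | .node v ts => by simp [contour, numEdges, length_contourL h v ts]
theorem length_contourL (h : ℕ) (v : ℤ) :
    ∀ ts : List LTree, (contourL h v ts).length = 2 * numEdgesL ts
  | [] => rfl
  | t :: ts => by
    simp [contourL_cons, numEdgesL, length_contour (h + 1) t, length_contourL h v ts]; ring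
end

mutual
theorem le_fst_of_mem_contour {h : ℕ} {p : ℕ × ℤ} :
    ∀ {T : LTree}, p ∈ contour h T → h ≤ p.1
  | .node v ts, hp => by
    rcases List.mem_cons.1 hp with rfl | hp
    · rfl
    · exact le_fst_of_mem_contourL hp
theorem le_fst_of_mem_contourL {h : ℕ} {v : ℤ} {p : ℕ × ℤ} :
    ∀ {ts : List LTree}, p ∈ contourL h v ts → h ≤ p.1
  | t :: ts, hp => by
    rw [contourL_cons, List.mem_append, List.mem_cons] at hp
    rcases hp with hp | rfl | hp
    · exact (le_fst_of_mem_contour hp).trans' h.le_succ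
    · rfl
    · exact le_fst_of_mem_contourL hp
end

mutual
theorem contour_injective (h : ℕ) : Function.Injective (contour h)
  | .node v₁ ts₁, .node v₂ ts₂, he => by
    simp only [contour, List.cons.injEq, Prod.mk.injEq, true_and] at he
    obtain ⟨rfl, he⟩ := he
    rw [contourL_injective h v₁ he]
theorem contourL_injective (h : ℕ) (v : ℤ) : Function.Injective (contourL h v)
  | [], [], _ => rfl
  | [], _ :: _, he => by simp [contourL] at he
  | _ :: _, [], he => by simp [contourL] at he
  | t₁ :: ts₁, t₂ :: ts₂, he => by
    rw [contourL_cons, contourL_cons] at he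
    have hgt : ∀ t : LTree, ∀ p ∈ contour (h + 1) t, decide (h < p.1) := fun t p hp => by
      simpa using le_fst_of_mem_contour hp
    obtain ⟨ht, hts⟩ := List.append_cons_inj_of_forall (hgt t₁) (hgt t₂) (by simp) he
    rw [contour_injective (h + 1) ht, contourL_injective h v hts]
end

/-- The consistency condition of `EVSet`, read on a list of (height, label) pairs. -/
def Consistent (l : List (ℕ × ℤ)) : Prop :=
  ∀ i j, i ≤ j → j < l.length → (l.getD i (0, 0)).1 = (l.getD j (0, 0)).1 →
    (∀ k, i < k → k < j → (l.getD i (0, 0)).1 ≤ (l.getD k (0, 0)).1) →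
    (l.getD i (0, 0)).2 = (l.getD j (0, 0)).2

theorem consistent_singleton (x : ℕ × ℤ) : Consistent [x] := by
  intro i j hij hj _ _
  obtain rfl : i = j := by simp at hj; omega
  rfl

theorem Consistent.infix {l l' : List (ℕ × ℤ)} (hl : Consistent l) (h : l' <:+: l) :
    Consistent l' := by
  obtain ⟨a, b, rfl⟩ := h
  have hget : ∀ k < l'.length, (a ++ l' ++ b).getD (a.length + k) (0, 0) = l'.getD k (0, 0) := by
    intro k hk
    rw [List.append_assoc, List.getD_append_right _ _ _ _ (by omega), Nat.add_sub_cancel_left,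
      List.getD_append _ _ _ _ hk]
  intro i j hij hj hEq hMin
  have := hl (a.length + i) (a.length + j) (by omega) (by simp; omega)
    (by rwa [hget i (by omega), hget j hj]) fun k hk hkj => ?_
  · rwa [hget i (by omega), hget j hj] at this
  · obtain ⟨k, rfl⟩ : ∃ k', k = a.length + k' := ⟨k - a.length, by omega⟩
    rw [hget i (by omega), hget k (by omega)]
    exact hMin k (by omega) (by omega)

theorem Consistent.snd_eq {x y : ℕ × ℤ} {A C : List (ℕ × ℤ)}
    (hc : Consistent (x :: (A ++ y :: C))) (hA : ∀ a ∈ A, x.1 ≤ a.1) (hxy : x.1 = y.1) :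
    x.2 = y.2 := by
  have hy : (x :: (A ++ y :: C)).getD (A.length + 1) (0, 0) = y := by simp
  have := hc 0 (A.length + 1) (by omega) (by simp) (by simpa [hy] using hxy) fun k hk hkA => by
    obtain ⟨k, rfl⟩ : ∃ k', k = k' + 1 := ⟨k - 1, by omega⟩
    have hk : k < A.length := by omega
    rw [List.getD_cons_zero, List.getD_cons_succ, List.getD_append _ _ _ _ hk,
      List.getD_eq_getElem _ _ hk]
    exact hA _ (List.getElem_mem _)
  simpa [hy] using this

theorem Consistent.cons_append_cons {x : ℕ × ℤ} {A C : List (ℕ × ℤ)} (hA : Consistent A)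
    (hC : Consistent (x :: C)) (hgt : ∀ a ∈ A, x.1 < a.1) : Consistent (x :: (A ++ x :: C)) := by
  set L := x :: (A ++ x :: C)
  set m := A.length + 1
  have hpre : ∀ k < A.length, L.getD (k + 1) (0, 0) = A.getD k (0, 0) := fun k hk => by
    simp only [L, List.getD_cons_succ, List.getD_append _ _ _ _ hk]
  have hgtL : ∀ k, 0 < k → k < m → x.1 < (L.getD k (0, 0)).1 := by
    intro k hk0 hkm
    obtain ⟨k, rfl⟩ : ∃ k', k = k' + 1 := ⟨k - 1, by omega⟩
    rw [hpre k (by omega), List.getD_eq_getElem _ _ (by omega)]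
    exact hgt _ (List.getElem_mem _)
  have hsuf : ∀ k, m ≤ k → L.getD k (0, 0) = (x :: C).getD (k - m) (0, 0) := fun k hk => by
    rw [show L = (x :: A) ++ (x :: C) from rfl,
      List.getD_append_right _ _ _ _ (by simp [m] at hk ⊢; omega)]
    rfl
  have hx : L.getD 0 (0, 0) = x := rfl
  have hm : L.getD m (0, 0) = x := by rw [hsuf m le_rfl, Nat.sub_self]; rfl
  have hright : ∀ i j, m ≤ i → i ≤ j → j < L.length →
      (L.getD i (0, 0)).1 = (L.getD j (0, 0)).1 →
      (∀ k, i < k → k < j → (L.getD i (0, 0)).1 ≤ (L.getD k (0, 0)).1) →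
      (L.getD i (0, 0)).2 = (L.getD j (0, 0)).2 := by
    intro i j hi hij hj hEq hMin
    rw [hsuf i hi, hsuf j (hi.trans hij)] at hEq ⊢
    refine hC (i - m) (j - m) (by omega) (by simp [L, m] at hj ⊢; omega) hEq fun k hk hkj => ?_
    have := hMin (k + m) (by omega) (by omega)
    rwa [hsuf i hi, hsuf (k + m) (by omega), Nat.add_sub_cancel] at this
  intro i j hij hj hEq hMin
  rcases Nat.lt_or_ge i m with him | him
  · rcases Nat.eq_zero_or_pos i with rfl | hi0
    · rcases Nat.lt_or_ge j m with hjm | hjm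
      · obtain rfl : j = 0 := by
          by_contra hj0
          have := hgtL j (by omega) hjm
          rw [hx] at hEq
          omega
        rfl
      · -- the root `x` occurs again at position `m`, so the pair may start there instead
        rw [hx, ← hm] at hEq hMin ⊢
        exact hright m j le_rfl hjm hj hEq fun k hk hkj => hMin k (by omega) hkj
    · have hi := hgtL i hi0 him
      rcases Nat.lt_or_ge j m with hjm | hjm
      · obtain ⟨i, rfl⟩ : ∃ i', i = i' + 1 := ⟨i - 1, by omega⟩
        obtain ⟨j, rfl⟩ : ∃ j', j = j' + 1 := ⟨j - 1, by omega⟩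
        rw [hpre i (by omega), hpre j (by omega)] at hEq ⊢
        refine hA i j (by omega) (by omega) hEq fun k hk hkj => ?_
        have := hMin (k + 1) (by omega) (by omega)
        rwa [hpre i (by omega), hpre k (by omega)] at this
      · exfalso
        rcases hjm.eq_or_lt with rfl | hjm
        · rw [hm] at hEq
          omega
        · have := hMin m him hjm
          rw [hm] at this
          omega
  · exact hright i j him hij hj hEq hMin

/-- The conditions defining `EVSet`, read on a list of (height, label) pairs, for a walk based
at height `h`. -/
structure IsAdmissible (h : ℕ) (l : List (ℕ × ℤ)) : Prop where
  head?_fst : l.head?.map Prod.fst = some h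
  getLast?_fst : l.getLast?.map Prod.fst = some h
  le_fst : ∀ p ∈ l, h ≤ p.1
  isChain_fst : l.IsChain fun p q => |(q.1 : ℤ) - p.1| = 1
  isChain_snd : l.IsChain fun p q => |q.2 - p.2| ≤ 1
  consistent : Consistent l

theorem isAdmissible_singleton (h : ℕ) (v : ℤ) : IsAdmissible h [(h, v)] :=
  ⟨rfl, rfl, by simp, .singleton _, .singleton _, consistent_singleton _⟩

theorem IsAdmissible.getLast?_eq_head? {h : ℕ} {l : List (ℕ × ℤ)} (hl : IsAdmissible h l) :
    l.getLast? = l.head? := by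
  rcases l with _ | ⟨x, l⟩
  · rfl
  rcases l.eq_nil_or_concat with rfl | ⟨A, y, rfl⟩
  · rfl
  rw [List.concat_eq_append] at hl ⊢
  have hlast : (x :: (A ++ [y])).getLast? = some y := by
    rw [← List.cons_append, List.getLast?_concat]
  have hx : x.1 = h := by simpa using hl.head?_fst
  have hy : y.1 = h := by simpa [hlast] using hl.getLast?_fst
  rw [hlast, List.head?_cons, Option.some_inj]
  have hxy : x.1 = y.1 := hx.trans hy.symm
  refine (Prod.ext hxy (hl.consistent.snd_eq (fun a ha => ?_) hxy)).symm
  rw [hx]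
  exact hl.le_fst a (by simp [ha])

theorem IsAdmissible.of_infix {h h' : ℕ} {l l' : List (ℕ × ℤ)} (hl : IsAdmissible h l)
    (hl' : l' <:+: l) (hhead : l'.head?.map Prod.fst = some h')
    (hlast : l'.getLast?.map Prod.fst = some h') (hle : ∀ p ∈ l', h' ≤ p.1) :
    IsAdmissible h' l' :=
  ⟨hhead, hlast, hle, hl.isChain_fst.infix hl', hl.isChain_snd.infix hl', hl.consistent.infix hl'⟩

theorem IsAdmissible.cons_append_cons {h : ℕ} {v w : ℤ} {A C : List (ℕ × ℤ)}
    (hA : IsAdmissible (h + 1) A) (hC : IsAdmissible h ((h, v) :: C))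
    (hAhead : A.head? = some (h + 1, w)) (hvw : |w - v| ≤ 1) :
    IsAdmissible h ((h, v) :: (A ++ (h, v) :: C)) where
  head?_fst := rfl
  getLast?_fst := by rw [← List.cons_append, List.getLast?_append_cons]; exact hC.getLast?_fst
  le_fst := by
    simp only [List.mem_cons, List.mem_append]
    rintro p (rfl | hp | rfl | hp)
    exacts [le_rfl, (hA.le_fst p hp).trans' h.le_succ, le_rfl, hC.le_fst p (.tail _ hp)]
  isChain_fst := hA.isChain_fst.cons_append_cons hC.isChain_fst hAhead
    (hA.getLast?_eq_head?.trans hAhead) (by simp) (by simp)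
  isChain_snd := hA.isChain_snd.cons_append_cons hC.isChain_snd hAhead
    (hA.getLast?_eq_head?.trans hAhead) hvw (by rwa [abs_sub_comm])
  consistent := hA.consistent.cons_append_cons hC.consistent fun p hp => hA.le_fst p hp

mutual
theorem isAdmissible_contour {h : ℕ} : ∀ {T : LTree}, T.Good → IsAdmissible h (contour h T)
  | .node _ _, hT => isAdmissible_cons_contourL hT
theorem isAdmissible_cons_contourL {h : ℕ} {v : ℤ} :
    ∀ {ts : List LTree}, GoodL v ts → IsAdmissible h ((h, v) :: contourL h v ts)
  | [], _ => isAdmissible_singleton h v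
  | t :: _, ⟨hvt, ht, hts⟩ => by
    rw [contourL_cons]
    exact (isAdmissible_contour ht).cons_append_cons (isAdmissible_cons_contourL hts)
      (head?_contour _ t) hvt
end

theorem IsAdmissible.exists_first_return {h : ℕ} {v : ℤ} {p : ℕ × ℤ} {l : List (ℕ × ℤ)}
    (hl : IsAdmissible h ((h, v) :: p :: l)) :
    ∃ A C, p :: l = A ++ (h, v) :: C ∧ ∀ a ∈ A, h < a.1 := by
  set P : ℕ × ℤ → Bool := fun q => h < q.1
  have hA : ∀ a ∈ (p :: l).takeWhile P, h < a.1 := fun a ha => by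
    simpa [P] using List.mem_takeWhile_imp ha
  obtain ⟨q, C, hqC⟩ : ∃ q C, (p :: l).dropWhile P = q :: C := by
    refine List.exists_cons_of_ne_nil fun hnil => ?_
    have hall : (p :: l).takeWhile P = p :: l := by
      simpa [hnil] using List.takeWhile_append_dropWhile (p := P) (l := p :: l)
    obtain ⟨y, hy, hyh⟩ : ∃ y, (p :: l).getLast? = some y ∧ y.1 = h := by
      simpa [List.getLast?_cons_cons] using hl.getLast?_fst
    have := hA y (by rw [hall]; exact List.mem_of_getLast? hy)
    omega
  have hsplit : p :: l = (p :: l).takeWhile P ++ q :: C := by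
    rw [← hqC, List.takeWhile_append_dropWhile]
  have hq : q.1 = h := by
    have hnot := List.head?_dropWhile_not P (p :: l)
    rw [hqC] at hnot
    have := hl.le_fst q (.tail _ (hsplit ▸ List.mem_append_right _ (.head _)))
    simp only [List.head?_cons, P, decide_eq_false_iff_not] at hnot
    omega
  obtain rfl : q = (h, v) := by
    have hc := hl.consistent
    rw [hsplit] at hc
    exact Prod.ext hq (hc.snd_eq (fun a ha => (hA a ha).le) hq.symm).symm
  exact ⟨_, C, hsplit, hA⟩

theorem IsAdmissible.exists_cons_append_cons {h : ℕ} {v : ℤ} {p : ℕ × ℤ} {l : List (ℕ × ℤ)}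
    (hl : IsAdmissible h ((h, v) :: p :: l)) :
    ∃ A C, p :: l = A ++ (h, v) :: C ∧ A.head? = some p ∧ |p.2 - v| ≤ 1 ∧
      IsAdmissible (h + 1) A ∧ IsAdmissible h ((h, v) :: C) := by
  obtain ⟨A, C, hsplit, hA⟩ := hl.exists_first_return
  have hstep := hl.isChain_fst
  rw [hsplit] at hstep
  have hp : p.1 = h + 1 := by
    have hle := hl.le_fst p (by simp)
    rcases (abs_eq zero_le_one).1 (List.isChain_cons_cons.1 hl.isChain_fst).1 with h1 | h1 <;>
      omega
  obtain ⟨A, rfl⟩ : ∃ A', A = p :: A' := by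
    rcases A with _ | ⟨a, A⟩
    · obtain rfl : p = (h, v) := (List.cons.inj hsplit).1
      simp at hp
    · exact ⟨A, by rw [(List.cons.inj hsplit).1]⟩
  have hlastA : (p :: A).getLast?.map Prod.fst = some (h + 1) := by
    rw [List.getLast?_eq_some_getLast (List.cons_ne_nil _ _), Option.map_some, Option.some_inj]
    have hjoin := (List.isChain_append.1 (List.isChain_cons.1 hstep).2).2.2 _
      (List.getLast?_eq_some_getLast (List.cons_ne_nil _ _)) (h, v) rfl
    have := hA _ (List.getLast_mem (List.cons_ne_nil _ _))
    rcases (abs_eq zero_le_one).1 hjoin with h1 | h1 <;> omega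
  refine ⟨p :: A, C, hsplit, rfl, (List.isChain_cons_cons.1 hl.isChain_snd).1, ?_, ?_⟩
  · exact hl.of_infix ⟨[(h, v)], (h, v) :: C, by rw [hsplit]; simp⟩ (by simp [hp]) hlastA hA
  · refine hl.of_infix ⟨(h, v) :: p :: A, [], by rw [hsplit]; simp⟩ rfl ?_
      fun a ha => hl.le_fst a (by rw [hsplit]; simp_all)
    have := hl.getLast?_fst
    rwa [hsplit, ← List.cons_append, List.getLast?_append_cons] at this

theorem IsAdmissible.exists_contour_eq {h : ℕ} {l : List (ℕ × ℤ)} (hl : IsAdmissible h l) :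
    ∃ T : LTree, T.Good ∧ contour h T = l := by
  induction hn : l.length using Nat.strong_induction_on generalizing h l with
  | _ n ih =>
  rcases l with _ | ⟨⟨h', v⟩, _ | ⟨p, l⟩⟩
  · simpa using hl.head?_fst
  all_goals obtain rfl : h = h' := by simpa using hl.head?_fst.symm
  · exact ⟨.node v [], trivial, rfl⟩
  obtain ⟨A, C, hsplit, hAhead, hpv, hA, hC⟩ := hl.exists_cons_append_cons
  have hlen := congrArg List.length hsplit
  simp only [List.length_cons, List.length_append] at hlen
  obtain ⟨t, ht, rfl⟩ := ih _ (by simp at hn; omega) hA rfl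
  obtain ⟨⟨w, ts⟩, hT, hTC⟩ := ih _ (by simp at hn ⊢; omega) hC rfl
  obtain ⟨hw, rfl⟩ : w = v ∧ contourL h w ts = C := by simpa [contour] using hTC
  subst w
  refine ⟨.node v (t :: ts), ⟨?_, ht, hT⟩, ?_⟩
  · rw [head?_contour, Option.some_inj] at hAhead
    rwa [← hAhead] at hpv
  · rw [contour, contourL_cons, hsplit]

def listPair (n : ℕ) (l : List (ℕ × ℤ)) : (Fin (2 * n + 1) → ℤ) × (Fin (2 * n + 1) → ℤ) :=
  (fun t => ((l.getD t (0, 0)).1 : ℤ), fun t => (l.getD t (0, 0)).2)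

theorem contourPair_eq_listPair (n : ℕ) (T : LTree) :
    contourPair n T = listPair n (T.contour 0) := rfl

theorem listPair_injOn (n : ℕ) : Set.InjOn (listPair n) {l | l.length = 2 * n + 1} := by
  intro l₁ h₁ l₂ h₂ h
  refine List.ext_getElem (h₁.trans h₂.symm) fun i hi₁ hi₂ => ?_
  have hE := congrFun (congrArg Prod.fst h) ⟨i, h₁ ▸ hi₁⟩
  have hV := congrFun (congrArg Prod.snd h) ⟨i, h₁ ▸ hi₁⟩
  simp only [listPair, List.getD_eq_getElem _ _ hi₁, List.getD_eq_getElem _ _ hi₂,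
    Nat.cast_inj] at hE hV
  exact Prod.ext hE hV

theorem exists_listPair_eq {n : ℕ} {p : (Fin (2 * n + 1) → ℤ) × (Fin (2 * n + 1) → ℤ)}
    (hp : ∀ t, 0 ≤ p.1 t) : ∃ l : List (ℕ × ℤ), l.length = 2 * n + 1 ∧ listPair n l = p :=
  ⟨List.ofFn fun t => ((p.1 t).toNat, p.2 t), List.length_ofFn, by
    ext t <;> simp only [listPair, List.getD_eq_getElem _ _ (t.2.trans_eq List.length_ofFn.symm),
      List.getElem_ofFn, Int.toNat_of_nonneg (hp t)]⟩

theorem isChain_iff_forall_fin {R : ℕ × ℤ → ℕ × ℤ → Prop} {n : ℕ} {l : List (ℕ × ℤ)}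
    (hl : l.length = 2 * n + 1) :
    l.IsChain R ↔ ∀ t : Fin (2 * n + 1), ∀ _ : t.val + 1 < 2 * n + 1,
      R (l.getD t (0, 0)) (l.getD (t.val + 1) (0, 0)) := by
  simp only [List.isChain_iff_getElem, Fin.forall_iff]
  refine forall_congr' fun i => ⟨fun h _ hi => ?_, fun h hi => ?_⟩
  · rw [List.getD_eq_getElem _ _ (by omega), List.getD_eq_getElem _ _ (by omega)]
    exact h (by omega)
  · have := h (by omega) (by omega)
    rwa [List.getD_eq_getElem _ _ (by omega), List.getD_eq_getElem _ _ (by omega)] at this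

theorem consistent_iff_forall_fin {n : ℕ} {l : List (ℕ × ℤ)} (hl : l.length = 2 * n + 1) :
    Consistent l ↔ ∀ t t' : Fin (2 * n + 1), t ≤ t' →
      ((l.getD t (0, 0)).1 : ℤ) = (l.getD t' (0, 0)).1 →
      (∀ s : Fin (2 * n + 1), t < s → s < t' →
        ((l.getD t (0, 0)).1 : ℤ) ≤ (l.getD s (0, 0)).1) →
      (l.getD t (0, 0)).2 = (l.getD t' (0, 0)).2 := by
  simp only [Consistent, Fin.forall_iff, Fin.mk_le_mk, Fin.mk_lt_mk, Nat.cast_inj, Nat.cast_le, hl]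
  exact forall_congr' fun i =>
    ⟨fun h _ j hj hij hEq hMin => h j hij hj hEq fun k hik hkj => hMin k (by omega) hik hkj,
      fun h j hij hj hEq hMin => h (by omega) j hj hij hEq fun k _ hik hkj => hMin k hik hkj⟩

theorem listPair_mem_EVSet_iff {n : ℕ} {l : List (ℕ × ℤ)} (hl : l.length = 2 * n + 1) :
    listPair n l ∈ EVSet n ↔
      IsAdmissible 0 l ∧ l.head? = some (0, 0) ∧ l.getLast? = some (0, 0) := by
  have hhead : l.head? = some (l.getD 0 (0, 0)) := by
    rw [List.head?_eq_getElem?, List.getD_eq_getElem?_getD, List.getElem?_eq_getElem (by omega)]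
    rfl
  have hlast : l.getLast? = some (l.getD (2 * n) (0, 0)) := by
    rw [List.getLast?_eq_getElem?, hl, Nat.add_sub_cancel, List.getD_eq_getElem?_getD,
      List.getElem?_eq_getElem (by omega)]
    rfl
  simp only [EVSet, listPair, Set.mem_ofPred_eq, hhead, hlast]
  constructor
  · rintro ⟨hE0, hE2n, -, hEstep, hV0, hV2n, hVstep, hcons⟩
    rw [Nat.cast_eq_zero] at hE0 hE2n
    refine ⟨⟨by rw [hhead, Option.map_some, hE0], by rw [hlast, Option.map_some, hE2n],
      fun _ _ => Nat.zero_le _, (isChain_iff_forall_fin hl).2 hEstep,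
      (isChain_iff_forall_fin hl).2 hVstep, (consistent_iff_forall_fin hl).2 hcons⟩,
      congrArg some (Prod.ext hE0 hV0 : _ = ((0 : ℕ), (0 : ℤ))),
      congrArg some (Prod.ext hE2n hV2n : _ = ((0 : ℕ), (0 : ℤ)))⟩
  · rintro ⟨hadm, h0, h2n⟩
    rw [Option.some_inj] at h0 h2n
    exact ⟨by rw [h0]; rfl, by rw [h2n]; rfl, fun _ => Int.natCast_nonneg _,
      (isChain_iff_forall_fin hl).1 hadm.isChain_fst, by rw [h0], by rw [h2n],
      (isChain_iff_forall_fin hl).1 hadm.isChain_snd,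
      (consistent_iff_forall_fin hl).1 hadm.consistent⟩

end LTree

/-- Contour pair bijection: taking contour pairs puts embedded trees with `n`
edges in one-to-one correspondence with the set `𝓔𝓥_{2n}`. -/
theorem contourPair_bijOn (n : ℕ) :
    Set.BijOn (contourPair n) (EmbTrees0 n) (EVSet n) := by
  refine ⟨?_, ?_, ?_⟩
  · rintro T ⟨hT, hroot, rfl⟩
    rw [LTree.contourPair_eq_listPair, LTree.listPair_mem_EVSet_iff (LTree.length_contour 0 T)]
    refine ⟨LTree.isAdmissible_contour hT, by rw [LTree.head?_contour, hroot], ?_⟩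
    rw [(LTree.isAdmissible_contour hT).getLast?_eq_head?, LTree.head?_contour, hroot]
  · rintro T₁ ⟨-, -, hn₁⟩ T₂ ⟨-, -, hn₂⟩ h
    have hlen : ∀ T : LTree, T.numEdges = n → (T.contour 0).length = 2 * n + 1 :=
      fun T hT => hT ▸ LTree.length_contour 0 T
    exact LTree.contour_injective 0 (LTree.listPair_injOn n (hlen T₁ hn₁) (hlen T₂ hn₂) h)
  · intro p hp
    have hE : ∀ t, 0 ≤ p.1 t := hp.2.2.1
    obtain ⟨l, hl, rfl⟩ := LTree.exists_listPair_eq hE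
    obtain ⟨hadm, hhead, -⟩ := (LTree.listPair_mem_EVSet_iff hl).1 hp
    obtain ⟨T, hT, rfl⟩ := hadm.exists_contour_eq
    refine ⟨T, ⟨hT, ?_, ?_⟩, rfl⟩
    · simpa [LTree.head?_contour] using hhead
    · have := LTree.length_contour 0 T
      omega
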